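/- arXiv:2406.18059 — 4 statements merged into one kernel-verified Lean document; each statement's English description precedes it below -/
import Mathlib

section
/- Let b_n = Σ_{k=0}^n C(n,k)^2·C(n+k,k) be the Apéry numbers of the second kind and α an integer. Define v_n(α) = Σ_{k=0}^n C(n,k)·(-α)^{n-k}·b_k and let M = gcd(v_1(α), v_2(α), v_3(α)) (a non-negative integer). Then for all integers n ≥ 0, b_n ≡ α^n modulo the largest square-free divisor of M (interpreted as 1 if M = 0), i.e. modulo the radical of M. -/
/-!
Only the primes `p ∣ M` matter. Since `v₁ = 3 - α` and `v₂ - v₁² = 10`, such a `p` is `2` or `5`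
and `α ≡ 3 (mod p)`. The summand `C(n,k)² C(n+k,k)` is multiplicative in the base-`p` digits
modulo `p` by Lucas's theorem, hence so is `bₙ`: `b_{pm+r} ≡ b_m b_r` for `r < p`. A sequence with
this property is determined by its values below `p`, and `bᵣ ≡ 3ʳ (mod 10)` for `r < 5`, so
`bₙ ≡ 3ⁿ ≡ αⁿ (mod p)` by Fermat's little theorem `3ᵖ ≡ 3`.
-/

/-- The Apéry numbers of the second kind `bₙ = ∑ₖ C(n,k)² C(n+k,k)`. -/
def aperyB (n : ℕ) : ℤ :=
  ∑ k ∈ Finset.range (n + 1), (n.choose k : ℤ) ^ 2 * ((n + k).choose k : ℤ)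

/-- The binomial transform of an integer sequence `u` at `α`. -/
def binomialTransform (u : ℕ → ℤ) (α : ℤ) (n : ℕ) : ℤ :=
  ∑ k ∈ Finset.range (n + 1), (n.choose k : ℤ) * (-α) ^ (n - k) * u k

/-- The radical (largest square-free divisor) of a natural number:
the product of its distinct prime factors; the radical of `0` is `1`. -/
def natRadical (M : ℕ) : ℕ := ∏ p ∈ M.primeFactors, p

open Finset

theorem Finset.sum_range_mul_eq_sum_sum {M : Type*} [AddCommMonoid M] (f : ℕ → M) (p q : ℕ) :
    ∑ k ∈ range (p * q), f k = ∑ j ∈ range q, ∑ s ∈ range p, f (p * j + s) := by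
  induction q with
  | zero => simp
  | succ q ih => rw [Nat.mul_succ, sum_range_add, ih, sum_range_succ]

theorem eq_pow_of_mul_add_eq_mul {M : Type*} [Monoid M] {p : ℕ} (hp : 1 < p) {a : M}
    (ha : a ^ p = a) {u : ℕ → M} (hu : ∀ m r, r < p → u (p * m + r) = u m * u r)
    (hbase : ∀ r < p, u r = a ^ r) (n : ℕ) : u n = a ^ n := by
  induction n using Nat.strong_induction_on with
  | _ n ih =>
    rcases lt_or_ge n p with hn | hn
    · exact hbase n hn
    · obtain ⟨m, r, hr, rfl⟩ : ∃ m r, r < p ∧ n = p * m + r :=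
        ⟨n / p, n % p, Nat.mod_lt _ (by omega), (Nat.div_add_mod n p).symm⟩
      have hm : 0 < m := Nat.pos_of_ne_zero (by rintro rfl; omega)
      have hlt : m < p * m + r := by nlinarith
      rw [hu m r hr, ih m hlt, hbase r hr, pow_add, pow_mul, ha]

namespace Choose

variable {p : ℕ} [Fact p.Prime]

theorem choose_mul_add_mul_add_zmod {a b c d : ℕ} (hb : b < p) (hd : d < p) :
    ((p * a + b).choose (p * c + d) : ZMod p) = a.choose c * b.choose d := by
  have hp : 0 < p := Nat.pos_of_neZero p
  have lucas := (ZMod.intCast_eq_intCast_iff _ _ p).2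
    (choose_modEq_choose_mod_mul_choose_div (n := p * a + b) (k := p * c + d))
  push_cast at lucas
  rw [Nat.mul_add_mod, Nat.mul_add_mod, Nat.mod_eq_of_lt hb, Nat.mod_eq_of_lt hd,
    Nat.mul_add_div hp, Nat.mul_add_div hp, Nat.div_eq_of_lt hb, Nat.div_eq_of_lt hd,
    add_zero, add_zero] at lucas
  exact lucas.trans (mul_comm _ _)

end Choose

def aperyTerm (n k : ℕ) : ℤ := (n.choose k : ℤ) ^ 2 * ((n + k).choose k : ℤ)

theorem aperyB_eq_sum_range {n N : ℕ} (h : n < N) :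
    aperyB n = ∑ k ∈ range N, aperyTerm n k := by
  refine sum_subset (range_subset_range.2 h) fun k _ hk => ?_
  rw [mem_range, not_lt] at hk
  simp [Nat.choose_eq_zero_of_lt (show n < k by omega)]

section Lucas

open Choose

variable {p : ℕ} [Fact p.Prime]

theorem aperyTerm_mul_add_mul_add_zmod {m r j s : ℕ} (hr : r < p) (hs : s < p) :
    (aperyTerm (p * m + r) (p * j + s) : ZMod p) = aperyTerm m j * aperyTerm r s := by
  simp only [aperyTerm, Int.cast_mul, Int.cast_pow, Int.cast_natCast,
    choose_mul_add_mul_add_zmod hr hs]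
  rcases lt_or_ge (r + s) p with hrs | hrs
  · rw [show p * m + r + (p * j + s) = p * (m + j) + (r + s) by ring,
      choose_mul_add_mul_add_zmod hrs hs]
    ring
  · -- a carry: both `C(n+k, k)` factors vanish, since the low digit `r + s - p` of the sum is `< s`
    obtain ⟨t, ht⟩ : ∃ t, r + s = p + t := ⟨r + s - p, by omega⟩
    have hts : t < s := by omega
    have hsum : p * m + r + (p * j + s) = p * (m + j + 1) + t := by linarith
    have hcarry : ((p * m + r + (p * j + s)).choose (p * j + s) : ZMod p) = 0 := by
      rw [hsum, choose_mul_add_mul_add_zmod (by omega) hs, Nat.choose_eq_zero_of_lt hts]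
      simp
    have hlow : ((r + s).choose s : ZMod p) = 0 := by
      have := choose_mul_add_mul_add_zmod (a := 1) (c := 0) (show t < p by omega) hs
      rwa [mul_one, mul_zero, zero_add, ← ht, Nat.choose_eq_zero_of_lt hts, Nat.cast_zero,
        mul_zero] at this
    rw [hcarry, hlow]
    ring

theorem aperyB_mul_add_zmod (m : ℕ) {r : ℕ} (hr : r < p) :
    (aperyB (p * m + r) : ZMod p) = aperyB m * aperyB r := by
  have hN : p * m + r < p * (m + 1) := by rw [Nat.mul_succ]; omega
  rw [aperyB_eq_sum_range hN, aperyB_eq_sum_range m.lt_succ_self, aperyB_eq_sum_range hr]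
  push_cast
  rw [sum_range_mul_eq_sum_sum, sum_mul_sum]
  refine sum_congr rfl fun j _ => sum_congr rfl fun s hs => ?_
  exact aperyTerm_mul_add_mul_add_zmod hr (mem_range.1 hs)

end Lucas

theorem aperyB_modEq_three_pow_of_lt_five {r : ℕ} (hr : r < 5) : aperyB r ≡ 3 ^ r [ZMOD 10] := by
  revert r
  decide

theorem aperyB_modEq_three_pow {p : ℕ} (hp : p.Prime) (h10 : p ∣ 10) (n : ℕ) :
    aperyB n ≡ 3 ^ n [ZMOD p] := by
  have := Fact.mk hp
  have hp5 : p ≤ 5 := by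
    rcases (Nat.Prime.dvd_mul hp).1 (show p ∣ 2 * 5 from h10) with h | h
    · exact (Nat.le_of_dvd two_pos h).trans (by norm_num)
    · exact Nat.le_of_dvd (by norm_num) h
  have hbase : ∀ r < p, (aperyB r : ZMod p) = 3 ^ r := fun r hr => by
    have := (aperyB_modEq_three_pow_of_lt_five (hr.trans_le hp5)).of_dvd
      (Int.natCast_dvd_natCast.2 h10)
    exact_mod_cast (ZMod.intCast_eq_intCast_iff _ _ p).2 this
  rw [← ZMod.intCast_eq_intCast_iff]
  push_cast
  exact eq_pow_of_mul_add_eq_mul hp.one_lt (ZMod.pow_card 3)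
    (fun m r hr => aperyB_mul_add_zmod m hr) hbase n

theorem binomialTransform_one (u : ℕ → ℤ) (α : ℤ) :
    binomialTransform u α 1 = u 1 - α * u 0 := by
  rw [binomialTransform, sum_range_succ, sum_range_one]
  simp only [Nat.choose_zero_right, Nat.choose_self]
  ring

theorem binomialTransform_two (u : ℕ → ℤ) (α : ℤ) :
    binomialTransform u α 2 = u 2 - 2 * α * u 1 + α ^ 2 * u 0 := by
  rw [binomialTransform, sum_range_succ, sum_range_succ, sum_range_one]
  simp only [Nat.choose_zero_right, Nat.choose_one_right, Nat.choose_self]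
  ring

theorem binomialTransform_two_sub_sq {u : ℕ → ℤ} (h0 : u 0 = 1) (α : ℤ) :
    binomialTransform u α 2 - binomialTransform u α 1 ^ 2 = u 2 - u 1 ^ 2 := by
  rw [binomialTransform_two, binomialTransform_one, h0]
  ring

theorem Int.ModEq.natRadical_of_forall_prime {M : ℕ} {a b : ℤ}
    (h : ∀ p ∈ M.primeFactors, a ≡ b [ZMOD p]) : a ≡ b [ZMOD natRadical M] := by
  rw [Int.modEq_iff_dvd, natRadical, Int.natCast_dvd]
  refine prod_primes_dvd _ (fun p hp => (Nat.prime_of_mem_primeFactors hp).prime) fun p hp => ?_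
  exact Int.natCast_dvd.1 (Int.modEq_iff_dvd.1 (h p hp))

/-- With `M = gcd(v₁(α), v₂(α), v₃(α))` for the binomial transform `v` of the
Apéry numbers of the second kind, we have `bₙ ≡ αⁿ` modulo the radical of `M`
for all `n ≥ 0`. -/
theorem aperyB_modEq_radical (α : ℤ) :
    ∀ n : ℕ, aperyB n ≡ α ^ n
      [ZMOD (natRadical (Int.gcd (binomialTransform aperyB α 1)
        (Int.gcd (binomialTransform aperyB α 2) (binomialTransform aperyB α 3))) : ℤ)] := by
  intro n
  refine Int.ModEq.natRadical_of_forall_prime fun p hp => ?_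
  have hpM := Int.natCast_dvd_natCast.2 (Nat.dvd_of_mem_primeFactors hp)
  have h1 : (p : ℤ) ∣ binomialTransform aperyB α 1 := hpM.trans (Int.gcd_dvd_left _ _)
  have h2 : (p : ℤ) ∣ binomialTransform aperyB α 2 :=
    hpM.trans ((Int.gcd_dvd_right _ _).trans (Int.gcd_dvd_left _ _))
  have hv1 : binomialTransform aperyB α 1 = 3 - α := by
    rw [binomialTransform_one, show aperyB 1 = 3 by decide, show aperyB 0 = 1 by decide, mul_one]
  have hv2 : binomialTransform aperyB α 2 - binomialTransform aperyB α 1 ^ 2 = 10 := by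
    rw [binomialTransform_two_sub_sq (by decide)]
    decide
  have h10 : p ∣ 10 := by exact_mod_cast hv2 ▸ dvd_sub h2 (dvd_pow h1 two_ne_zero)
  have hα : 3 ≡ α [ZMOD p] := (Int.modEq_iff_dvd.2 (hv1 ▸ h1)).symm
  exact (aperyB_modEq_three_pow (Nat.prime_of_mem_primeFactors hp) h10 n).trans (hα.pow n)
end

section
/- For all integers n ≥ 0, the Apéry number a_n = Σ_{k=0}^n C(n,k)^2·C(n+k,k)^2 satisfies a_n ≡ 5^n (mod 24). -/
/-!
Modulo 3 this is the Lucas property `a (p m + b) ≡ a b * a m (mod p)` (for `b < p`) of the Apéry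
numbers, which follows from Lucas's theorem applied to each summand, together with
`a 0, a 1, a 2 ≡ 5⁰, 5¹, 5² (mod 3)`.

Modulo 8, for `k ≥ 1` the number `c k = C(n,k) C(n+k,k) = C(n+k,2k) C(2k,k)` is even, so
`c k ^ 2 ≡ 2 c k`, whence `a n ≡ 2 D n - 1` for the central Delannoy number `D n = ∑ c k`.
Vandermonde's identity gives `D n = ∑ C(n,j)² 2^(n-j) ≡ 1 + 2n (mod 4)`, so
`a n ≡ 1 + 4n ≡ 5ⁿ (mod 8)`.
-/

open Finset

def apery (n : ℕ) : ℕ := ∑ k ∈ range (n + 1), n.choose k ^ 2 * (n + k).choose k ^ 2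

def centralDelannoy (n : ℕ) : ℕ := ∑ k ∈ range (n + 1), n.choose k * (n + k).choose k

lemma apery_eq_sum_range {n N : ℕ} (h : n < N) :
    apery n = ∑ k ∈ range N, n.choose k ^ 2 * (n + k).choose k ^ 2 := by
  refine sum_subset (range_subset_range.2 h) fun k _ hk => ?_
  simp [Nat.choose_eq_zero_of_lt (not_lt.1 (mem_range.not.1 hk))]

lemma sum_range_mul {M : Type*} [AddCommMonoid M] (f : ℕ → M) (p m : ℕ) :
    ∑ k ∈ range (p * m), f k = ∑ K ∈ range m, ∑ j ∈ range p, f (p * K + j) := by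
  induction m with
  | zero => simp
  | succ m ih => rw [Nat.mul_succ, sum_range_add, ih, sum_range_succ]

section Lucas

variable {p : ℕ} [Fact p.Prime]

lemma natCast_choose_eq_choose_mod_mul_choose_div (n k : ℕ) :
    (n.choose k : ZMod p) = (n % p).choose (k % p) * (n / p).choose (k / p) := by
  exact_mod_cast (ZMod.natCast_eq_natCast_iff _ _ _).2
    Choose.choose_modEq_choose_mod_mul_choose_div_nat

lemma natCast_choose_eq_zero_of_mod_lt {n k : ℕ} (h : n % p < k % p) :
    (n.choose k : ZMod p) = 0 := by
  rw [natCast_choose_eq_choose_mod_mul_choose_div, Nat.choose_eq_zero_of_lt h, Nat.cast_zero,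
    zero_mul]

lemma natCast_choose_mul_add {b j : ℕ} (hb : b < p) (hj : j < p) (m K : ℕ) :
    ((p * m + b).choose (p * K + j) : ZMod p) = b.choose j * m.choose K := by
  have hp : 0 < p := (Fact.out : p.Prime).pos
  rw [natCast_choose_eq_choose_mod_mul_choose_div]
  simp [Nat.mul_add_div hp, Nat.mod_eq_of_lt, Nat.div_eq_of_lt, hb, hj]

/-- When `b + j ≥ p` both sides vanish: adding the digits `b` and `j` carries. -/
lemma natCast_choose_mul_add_add {b j : ℕ} (hb : b < p) (hj : j < p) (m K : ℕ) :
    ((p * m + (b + j)).choose (p * K + j) : ZMod p) = (b + j).choose j * m.choose K := by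
  rcases lt_or_ge (b + j) p with h | h
  · exact natCast_choose_mul_add h hj m K
  · have carry : (b + j) % p < j := by
      rw [Nat.mod_eq_sub_mod h, Nat.mod_eq_of_lt (by omega)]; omega
    rw [natCast_choose_eq_zero_of_mod_lt, natCast_choose_eq_zero_of_mod_lt (k := j), zero_mul]
    · rwa [Nat.mod_eq_of_lt hj]
    · simpa [Nat.mul_add_mod, Nat.mod_eq_of_lt hj] using carry

theorem apery_mul_add_modEq {b : ℕ} (hb : b < p) (m : ℕ) :
    apery (p * m + b) ≡ apery b * apery m [MOD p] := by
  have hn : p * m + b < p * (m + 1) := by rw [Nat.mul_succ]; omega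
  rw [← ZMod.natCast_eq_natCast_iff, apery_eq_sum_range hn, apery_eq_sum_range hb, apery]
  push_cast
  rw [sum_range_mul, sum_mul_sum, sum_comm]
  refine sum_congr rfl fun j hj => sum_congr rfl fun K _ => ?_
  rw [show p * m + b + (p * K + j) = p * (m + K) + (b + j) by ring,
    natCast_choose_mul_add hb (mem_range.1 hj), natCast_choose_mul_add_add hb (mem_range.1 hj)]
  ring

end Lucas

theorem apery_modEq_five_pow_three (n : ℕ) : apery n ≡ 5 ^ n [MOD 3] := by
  have : Fact (Nat.Prime 3) := ⟨Nat.prime_three⟩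
  induction n using Nat.strong_induction_on with
  | _ n ih =>
  have base : ∀ b < 3, apery b ≡ 5 ^ b [MOD 3] := by decide
  rcases lt_or_ge n 3 with hn | hn
  · exact base n hn
  calc apery n = apery (3 * (n / 3) + n % 3) := by rw [Nat.div_add_mod]
    _ ≡ apery (n % 3) * apery (n / 3) [MOD 3] :=
      apery_mul_add_modEq (Nat.mod_lt _ (by norm_num)) _
    _ ≡ 5 ^ (n % 3) * (5 ^ 3) ^ (n / 3) [MOD 3] :=
      (base _ (Nat.mod_lt _ (by norm_num))).mul
        ((ih _ (by omega)).trans ((by decide : 5 ≡ 5 ^ 3 [MOD 3]).pow _))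
    _ = 5 ^ n := by rw [← pow_mul, ← pow_add, add_comm, Nat.div_add_mod]

lemma add_choose_eq_sum_range {n k N : ℕ} (hk : k < N) :
    (n + k).choose k = ∑ j ∈ range N, n.choose j * k.choose j := by
  rw [Nat.add_choose_eq, Nat.sum_antidiagonal_eq_sum_range_succ_mk]
  refine sum_subset_zero_on_sdiff (range_subset_range.2 hk) (fun j hj => ?_) fun j hj => ?_
  · simp [Nat.choose_eq_zero_of_lt (not_lt.1 (mem_range.not.1 (mem_sdiff.1 hj).2))]
  · rw [Nat.choose_symm (Nat.lt_succ_iff.1 (mem_range.1 hj))]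

lemma sum_choose_mul_choose (n j : ℕ) :
    ∑ k ∈ range (n + 1), n.choose k * k.choose j = n.choose j * 2 ^ (n - j) := by
  rcases lt_or_ge n j with h | h
  · rw [Nat.choose_eq_zero_of_lt h, zero_mul]
    exact sum_eq_zero fun k hk => by
      rw [Nat.choose_eq_zero_of_lt (n := k) (by have := mem_range.1 hk; omega), mul_zero]
  obtain ⟨d, rfl⟩ := Nat.exists_eq_add_of_le h
  rw [add_assoc, sum_range_add, sum_eq_zero fun k hk => by
      rw [Nat.choose_eq_zero_of_lt (mem_range.1 hk), mul_zero], zero_add,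
    Nat.add_sub_cancel_left, ← Nat.sum_range_choose, mul_sum]
  refine sum_congr rfl fun i _ => ?_
  rw [Nat.choose_mul (Nat.le_add_right j i), Nat.add_sub_cancel_left, Nat.add_sub_cancel_left]

theorem centralDelannoy_eq_sum_choose_sq_mul_two_pow (n : ℕ) :
    centralDelannoy n = ∑ j ∈ range (n + 1), n.choose j ^ 2 * 2 ^ (n - j) := by
  calc centralDelannoy n
      = ∑ k ∈ range (n + 1), ∑ j ∈ range (n + 1), n.choose j * (n.choose k * k.choose j) := by
        refine sum_congr rfl fun k hk => ?_
        rw [add_choose_eq_sum_range (mem_range.1 hk), mul_sum]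
        exact sum_congr rfl fun j _ => by ring
    _ = ∑ j ∈ range (n + 1), n.choose j ^ 2 * 2 ^ (n - j) := by
        rw [sum_comm]
        refine sum_congr rfl fun j _ => ?_
        rw [← mul_sum, sum_choose_mul_choose]
        ring

theorem centralDelannoy_modEq_four (n : ℕ) : centralDelannoy n ≡ 1 + 2 * n [MOD 4] := by
  rw [← ZMod.natCast_eq_natCast_iff, centralDelannoy_eq_sum_choose_sq_mul_two_pow]
  rcases n with _ | m
  · rfl
  push_cast
  rw [sum_range_succ, sum_range_succ, sum_eq_zero fun j hj => ?_]
  · simp only [Nat.choose_succ_self_right, Nat.choose_self, Nat.sub_self,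
      show m + 1 - m = 1 by omega]
    push_cast
    generalize (m : ZMod 4) = x
    revert x
    decide
  · obtain ⟨e, he⟩ : ∃ e, m + 1 - j = e + 2 :=
      ⟨m - 1 - j, by have := mem_range.1 hj; omega⟩
    rw [he, pow_add, show (2 : ZMod 4) ^ 2 = 0 by decide, mul_zero, mul_zero]

lemma two_dvd_choose_mul_add_choose (n : ℕ) {k : ℕ} (hk : 0 < k) :
    2 ∣ n.choose k * (n + k).choose k := by
  have h := Nat.choose_mul (n := n + k) (k := 2 * k) (s := k) (by omega)
  rw [show n + k - k = n by omega, show 2 * k - k = k by omega] at h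
  rw [mul_comm, ← h]
  exact dvd_mul_of_dvd_right (Nat.two_dvd_centralBinom_of_one_le hk) _

lemma natCast_sq_eq_two_mul_of_two_dvd {x : ℕ} (hx : 2 ∣ x) : (x : ZMod 8) ^ 2 = 2 * x := by
  obtain ⟨y, rfl⟩ := hx
  push_cast
  generalize (y : ZMod 8) = z
  revert z
  decide

theorem apery_add_one_modEq_two_mul_centralDelannoy (n : ℕ) :
    apery n + 1 ≡ 2 * centralDelannoy n [MOD 8] := by
  rw [← ZMod.natCast_eq_natCast_iff, apery, centralDelannoy]
  push_cast
  rw [sum_range_succ', sum_range_succ', mul_add, mul_sum]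
  simp only [Nat.choose_zero_right, add_zero, Nat.cast_one, one_pow, mul_one]
  rw [add_assoc, one_add_one_eq_two]
  congr 1
  refine sum_congr rfl fun k _ => ?_
  rw [← mul_pow]
  exact_mod_cast natCast_sq_eq_two_mul_of_two_dvd (two_dvd_choose_mul_add_choose n k.succ_pos)

lemma five_pow_eq_one_add_four_mul (n : ℕ) : (5 : ZMod 8) ^ n = 1 + 4 * n := by
  induction n with
  | zero => simp
  | succ n ih =>
    push_cast
    rw [pow_succ, ih]
    have h16 : (16 : ZMod 8) = 0 := by decide
    linear_combination (n : ZMod 8) * h16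

theorem apery_modEq_five_pow_eight (n : ℕ) : apery n ≡ 5 ^ n [MOD 8] := by
  have hD : 2 * centralDelannoy n ≡ 2 * (1 + 2 * n) [MOD 8] :=
    (centralDelannoy_modEq_four n).mul_left' 2
  have ha := apery_add_one_modEq_two_mul_centralDelannoy n
  rw [← ZMod.natCast_eq_natCast_iff] at hD ha ⊢
  push_cast at hD ha ⊢
  linear_combination ha + hD - five_pow_eq_one_add_four_mul n

/-- Gessel's congruence: the Apéry numbers satisfy `aₙ ≡ 5ⁿ (mod 24)`. -/
theorem apery_modEq_five_pow (n : ℕ) :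
    (∑ k ∈ Finset.range (n + 1), (n.choose k : ℤ) ^ 2 * ((n + k).choose k : ℤ) ^ 2)
      ≡ 5 ^ n [ZMOD 24] := by
  have h24 : apery n ≡ 5 ^ n [MOD 8 * 3] :=
    (Nat.modEq_and_modEq_iff_modEq_mul (by norm_num)).1
      ⟨apery_modEq_five_pow_eight n, apery_modEq_five_pow_three n⟩
  have h := Int.natCast_modEq_iff.2 h24
  push_cast [apery] at h
  exact h
end

section
/- For all integers n ≥ 0, the Domb number D_n = Σ_{k=0}^n C(n,k)^2·C(2k,k)·C(2n-2k,n-k) satisfies D_n ≡ 4^n (mod 12). -/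
open Finset

def dombF (n k : ℕ) : ZMod 3 :=
  (n.choose k : ZMod 3) ^ 2 * ((2 * k).choose k : ZMod 3) * ((2 * n - 2 * k).choose (n - k) : ZMod 3)

lemma lucas3 (a b : ℕ) :
    (a.choose b : ZMod 3) = ((a % 3).choose (b % 3) : ZMod 3) * ((a / 3).choose (b / 3) : ZMod 3) := by
  have : Fact (Nat.Prime 3) := ⟨by norm_num⟩
  have h := @Choose.choose_modEq_choose_mod_mul_choose_div a b 3 this
  have h2 := (ZMod.intCast_eq_intCast_iff _ _ _).mpr h
  push_cast at h2 ⊢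
  exact h2

lemma lucas3_digit (A B a b u v : ℕ) (hu : u < 3) (hv : v < 3)
    (ha : A = 3 * a + u) (hb : B = 3 * b + v) :
    (A.choose B : ZMod 3) = (u.choose v : ZMod 3) * (a.choose b : ZMod 3) := by
  subst ha hb
  rw [lucas3]
  have h1 : (3 * a + u) % 3 = u := by omega
  have h2 : (3 * a + u) / 3 = a := by omega
  have h3 : (3 * b + v) % 3 = v := by omega
  have h4 : (3 * b + v) / 3 = b := by omega
  rw [h1, h2, h3, h4]

lemma sum_range_three_mul {M : Type*} [AddCommMonoid M] (g : ℕ → M) (m : ℕ) :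
    ∑ k ∈ range (3 * m), g k = ∑ j ∈ range m, (g (3*j) + g (3*j+1) + g (3*j+2)) := by
  induction m with
  | zero => simp
  | succ m ih =>
    have : 3 * (m + 1) = 3 * m + 1 + 1 + 1 := by ring
    rw [this, sum_range_succ, sum_range_succ, sum_range_succ, ih, sum_range_succ]
    abel

lemma domb_term_step (q r j : ℕ) (hr : r < 3) (hj : j ≤ q) :
    dombF (3*q+r) (3*j) + dombF (3*q+r) (3*j+1) + dombF (3*q+r) (3*j+2) = dombF q j := by
  obtain ⟨m, rfl⟩ : ∃ m, q = j + m := ⟨q - j, by omega⟩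
  unfold dombF
  have hq1 : 2 * (j + m) - 2 * j = 2 * m := by omega
  have hq2 : j + m - j = m := by omega
  rw [hq1, hq2]
  interval_cases r
  · simp only [Nat.add_zero]
    rw [lucas3_digit (3*(j+m)) (3*j) (j+m) j 0 0 (by omega) (by omega) (by omega) (by omega),
        lucas3_digit (3*(j+m)) (3*j+1) (j+m) j 0 1 (by omega) (by omega) (by omega) (by omega),
        lucas3_digit (2*(3*j)) (3*j) (2*j) j 0 0 (by omega) (by omega) (by omega) (by omega),
        lucas3_digit (2*(3*(j+m)) - 2*(3*j)) (3*(j+m) - 3*j) (2*m) m 0 0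
          (by omega) (by omega) (by omega) (by omega),
        lucas3_digit (3*(j+m)) (3*j+2) (j+m) j 0 2 (by omega) (by omega) (by omega) (by omega)]
    norm_num [Nat.choose]
  · rw [lucas3_digit (3*(j+m)+1) (3*j) (j+m) j 1 0 (by omega) (by omega) (by omega) (by omega),
        lucas3_digit (3*(j+m)+1) (3*j+1) (j+m) j 1 1 (by omega) (by omega) (by omega) (by omega),
        lucas3_digit (2*(3*j)) (3*j) (2*j) j 0 0 (by omega) (by omega) (by omega) (by omega),
        lucas3_digit (2*(3*j+1)) (3*j+1) (2*j) j 2 1 (by omega) (by omega) (by omega) (by omega),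
        lucas3_digit (2*(3*(j+m)+1) - 2*(3*j)) (3*(j+m)+1 - 3*j) (2*m) m 2 1
          (by omega) (by omega) (by omega) (by omega),
        lucas3_digit (2*(3*(j+m)+1) - 2*(3*j+1)) (3*(j+m)+1 - (3*j+1)) (2*m) m 0 0
          (by omega) (by omega) (by omega) (by omega),
        lucas3_digit (2*(3*j+2)) (3*j+2) (2*j+1) j 1 2 (by omega) (by omega) (by omega) (by omega)]
    norm_num [Nat.choose]
    ring_nf
    rw [show (4:ZMod 3) = 1 by decide, mul_one]
  · rw [lucas3_digit (3*(j+m)+2) (3*j+1) (j+m) j 2 1 (by omega) (by omega) (by omega) (by omega),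
        lucas3_digit (2*(3*j+1)) (3*j+1) (2*j) j 2 1 (by omega) (by omega) (by omega) (by omega),
        lucas3_digit (2*(3*(j+m)+2) - 2*(3*j+1)) (3*(j+m)+2 - (3*j+1)) (2*m) m 2 1
          (by omega) (by omega) (by omega) (by omega),
        lucas3_digit (2*(3*(j+m)+2) - 2*(3*j)) (3*(j+m)+2 - 3*j) (2*m+1) m 1 2
          (by omega) (by omega) (by omega) (by omega),
        lucas3_digit (2*(3*j+2)) (3*j+2) (2*j+1) j 1 2 (by omega) (by omega) (by omega) (by omega)]
    norm_num [Nat.choose]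
    ring_nf
    rw [show (16:ZMod 3) = 1 by decide, mul_one]

lemma dombF_eq_zero_of_lt {n k : ℕ} (h : n < k) : dombF n k = 0 := by
  unfold dombF
  rw [Nat.choose_eq_zero_of_lt h]
  push_cast
  ring

lemma domb_sum_step (n : ℕ) :
    ∑ k ∈ range (n + 1), dombF n k = ∑ j ∈ range (n / 3 + 1), dombF (n / 3) j := by
  obtain ⟨q, r, hr, rfl⟩ : ∃ q r, r < 3 ∧ n = 3 * q + r := ⟨n / 3, n % 3, by omega, by omega⟩
  have hq : (3 * q + r) / 3 = q := by omega
  rw [hq]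
  have hsub : ∑ k ∈ range (3 * q + r + 1), dombF (3*q+r) k
      = ∑ k ∈ range (3 * (q + 1)), dombF (3*q+r) k := by
    refine Finset.sum_subset ?_ ?_
    · intro x hx; simp only [mem_range] at *; omega
    · intro x _ hx; simp only [mem_range] at hx
      exact dombF_eq_zero_of_lt (by omega)
  rw [hsub, sum_range_three_mul]
  refine Finset.sum_congr rfl fun j hj => ?_
  simp only [mem_range] at hj
  exact domb_term_step q r j hr (by omega)

lemma domb_sum_one (n : ℕ) : ∑ k ∈ range (n + 1), dombF n k = 1 := by
  induction n using Nat.strong_induction_on with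
  | _ n ih =>
    rcases Nat.eq_zero_or_pos n with rfl | hn
    · simp [dombF]
    · rw [domb_sum_step]
      exact ih (n / 3) (by omega)

lemma domb_mod3 (n : ℕ) :
    (∑ k ∈ Finset.range (n + 1),
        (n.choose k : ℤ) ^ 2 * ((2 * k).choose k : ℤ) * ((2 * n - 2 * k).choose (n - k) : ℤ))
      ≡ 4 ^ n [ZMOD 3] := by
  have key : ((∑ k ∈ Finset.range (n + 1),
        (n.choose k : ℤ) ^ 2 * ((2 * k).choose k : ℤ) * ((2 * n - 2 * k).choose (n - k) : ℤ) : ℤ)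
      : ZMod 3) = (((4:ℤ) ^ n : ℤ) : ZMod 3) := ?_
  · exact_mod_cast (ZMod.intCast_eq_intCast_iff _ _ _).mp key
  push_cast
  have h1 : ∑ k ∈ Finset.range (n + 1),
      ((n.choose k : ZMod 3) ^ 2 * ((2 * k).choose k : ZMod 3)
        * ((2 * n - 2 * k).choose (n - k) : ZMod 3)) = 1 := domb_sum_one n
  rw [h1]
  rw [show (4 : ZMod 3) = 1 by decide, one_pow]

lemma two_dvd_central (m : ℕ) (hm : 0 < m) : 2 ∣ (2 * m).choose m :=
  Nat.two_dvd_centralBinom_of_one_le hm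

lemma domb_mod4 (n : ℕ) :
    (∑ k ∈ Finset.range (n + 1),
        (n.choose k : ℤ) ^ 2 * ((2 * k).choose k : ℤ) * ((2 * n - 2 * k).choose (n - k) : ℤ))
      ≡ 4 ^ n [ZMOD 4] := by
  rcases Nat.eq_zero_or_pos n with rfl | hn
  · decide
  obtain ⟨m, rfl⟩ : ∃ m, n = m + 1 := ⟨n - 1, by omega⟩
  set f : ℕ → ℤ := fun k =>
    ((m+1).choose k : ℤ) ^ 2 * ((2 * k).choose k : ℤ) * ((2 * (m+1) - 2 * k).choose (m+1 - k) : ℤ)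
    with hf
  have hsplit : ∑ k ∈ Finset.range (m + 2), f k
      = f 0 + (∑ k ∈ Finset.range m, f (k + 1)) + f (m + 1) := by
    rw [Finset.sum_range_succ' f (m+1), Finset.sum_range_succ]
    ring
  have hmid : ∀ k ∈ Finset.range m, (4 : ℤ) ∣ f (k + 1) := by
    intro k hk
    simp only [mem_range] at hk
    obtain ⟨b, hb⟩ := two_dvd_central (k + 1) (by omega)
    obtain ⟨c, hc⟩ := two_dvd_central (m - k) (by omega)
    have e1 : 2 * (m + 1) - 2 * (k + 1) = 2 * (m - k) := by omega
    have e2 : m + 1 - (k + 1) = m - k := by omega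
    rw [hf]
    simp only [e1, e2, hb, hc]
    push_cast
    exact ⟨((m+1).choose (k+1) : ℤ)^2 * b * c, by ring⟩
  have hends : f 0 + f (m + 1) ≡ 0 [ZMOD 4] := by
    obtain ⟨c, hc⟩ := two_dvd_central (m + 1) (by omega)
    have e0 : f 0 = ((2 * (m+1)).choose (m+1) : ℤ) := by
      simp [hf]
    have e1 : f (m + 1) = ((2 * (m+1)).choose (m+1) : ℤ) := by
      simp [hf]
    rw [e0, e1, hc]
    push_cast
    exact Int.modEq_zero_iff_dvd.mpr ⟨c, by ring⟩
  have h4 : (4 : ℤ) ^ (m + 1) ≡ 0 [ZMOD 4] :=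
    Int.modEq_zero_iff_dvd.mpr (dvd_pow_self 4 (by omega))
  refine Int.ModEq.trans ?_ h4.symm
  rw [hsplit]
  have hmid' : (∑ k ∈ Finset.range m, f (k + 1)) ≡ 0 [ZMOD 4] :=
    Int.modEq_zero_iff_dvd.mpr (Finset.dvd_sum hmid)
  calc f 0 + (∑ k ∈ Finset.range m, f (k + 1)) + f (m + 1)
      ≡ f 0 + 0 + f (m + 1) [ZMOD 4] := by exact (Int.ModEq.refl _).add hmid' |>.add (Int.ModEq.refl _)
    _ = f 0 + f (m + 1) := by ring
    _ ≡ 0 [ZMOD 4] := hends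

/-- The Domb numbers satisfy `Dₙ ≡ 4ⁿ (mod 12)`. -/
theorem domb_modEq_four_pow (n : ℕ) :
    (∑ k ∈ Finset.range (n + 1),
        (n.choose k : ℤ) ^ 2 * ((2 * k).choose k : ℤ) * ((2 * n - 2 * k).choose (n - k) : ℤ))
      ≡ 4 ^ n [ZMOD 12] := by
  have h := (Int.modEq_and_modEq_iff_modEq_mul
    (show (4:ℤ).natAbs.Coprime (3:ℤ).natAbs by norm_num)).mp ⟨domb_mod4 n, domb_mod3 n⟩
  norm_num at h
  exact h
end

section
/- Let u_n = Σ_{k=0}^n C(n,k)^2·C(2k,n)^2. Then for all integers n ≥ 2, u_{2n} ≡ u_n (mod 8). -/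
/-- The Apéry-like sequence (ε) of the first kind. -/
def aperyLikeEpsilon (n : ℕ) : ℤ :=
  ∑ k ∈ Finset.range (n + 1), (n.choose k : ℤ) ^ 2 * ((2 * k).choose n : ℤ) ^ 2

/-!
Both sides are divisible by `8`. Write `u_n = ∑ₖ tₖ²` with
`tₖ = C(n,k) C(2k,n) = C(2k,k) C(k,n-k)`. By Kummer's theorem `C(2k,k)` is divisible by
`2` to the power of the number of one bits of `k`, so `4 ∣ tₖ` unless `k` is a power of two and
`n ∈ {k, 2k}`; in that case `tₖ = C(2k,k) ≡ 2 (mod 4)`. For `n ≥ 2` there are no such `k` unless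
`n` is a power of two, and then there are exactly two, whose squares add up to `0 (mod 8)`.
-/

open Nat Finset

theorem Nat.exists_two_testBit_of_not_isPowerOfTwo {k : ℕ} (hk : k ≠ 0) (h : ¬ k.isPowerOfTwo) :
    ∃ i j, i < j ∧ k.testBit i ∧ k.testBit j := by
  obtain ⟨j, hj, hjmax⟩ := exists_most_significant_bit hk
  obtain ⟨i, hi⟩ : ∃ i, k.testBit i ≠ (2 ^ j).testBit i := by
    by_contra! hall
    exact h ⟨j, eq_of_testBit_eq hall⟩
  rcases lt_trichotomy i j with hij | rfl | hij
  · exact ⟨i, j, hij, by simpa [testBit_two_pow, hij.ne'] using hi, hj⟩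
  · simp [hj, testBit_two_pow_self] at hi
  · simp [hjmax i hij, hij.ne] at hi

theorem Nat.two_pow_succ_le_mod_add_mod_of_testBit {k t : ℕ} (h : k.testBit t) :
    2 ^ (t + 1) ≤ k % 2 ^ (t + 1) + k % 2 ^ (t + 1) := by
  have : 2 ^ t ≤ k % 2 ^ (t + 1) := ge_two_pow_of_testBit (by simp [testBit_mod_two_pow, h])
  have : 2 ^ (t + 1) = 2 ^ t + 2 ^ t := by ring
  omega

-- Kummer: a one bit of `k` in position `t` causes a carry into position `t + 1` of `k + k`.
theorem Nat.four_dvd_centralBinom_of_not_isPowerOfTwo {k : ℕ} (hk : k ≠ 0)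
    (h : ¬ k.isPowerOfTwo) : 4 ∣ k.centralBinom := by
  obtain ⟨i, j, hij, hi, hj⟩ := exists_two_testBit_of_not_isPowerOfTwo hk h
  have hcarries := Nat.Prime.emultiplicity_choose' (n := k) (k := k) (b := k + k + 1)
    prime_two (lt_succ_of_le (log_le_self _ _))
  have hmem : ∀ t, k.testBit t →
      t + 1 ∈ {s ∈ Ico 1 (k + k + 1) | 2 ^ s ≤ k % 2 ^ s + k % 2 ^ s} := fun t ht => by
    have := (Nat.lt_two_pow_self (n := t)).trans_le (ge_two_pow_of_testBit ht)
    simp only [mem_filter, mem_Ico]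
    exact ⟨by omega, two_pow_succ_le_mod_add_mod_of_testBit ht⟩
  have hcard := card_le_card (s := {i + 1, j + 1}) (insert_subset (hmem i hi)
    (singleton_subset_iff.mpr (hmem j hj)))
  rw [card_pair (by omega)] at hcard
  rw [centralBinom_eq_two_mul_choose, two_mul, show 4 = 2 ^ 2 by rfl]
  exact pow_dvd_of_le_emultiplicity (hcarries ▸ by exact_mod_cast hcard)

theorem Nat.centralBinom_two_pow_mod_four (m : ℕ) : (2 ^ m).centralBinom % 4 = 2 := by
  have hv := Nat.Prime.emultiplicity_choose_prime_pow (n := m + 1) prime_two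
    (pow_le_pow_right₀ one_le_two m.le_succ) (pow_ne_zero m two_ne_zero)
  rw [multiplicity_pow_self_of_prime prime_two.prime, add_tsub_cancel_left, pow_succ',
    ← centralBinom_eq_two_mul_choose, emultiplicity_eq_coe] at hv
  omega

theorem Nat.choose_mul_choose_two_mul {n k : ℕ} (hk : k ≤ n) :
    n.choose k * (2 * k).choose n = k.centralBinom * k.choose (n - k) := by
  have h := Nat.choose_mul (n := 2 * k) (k := n) (s := k) hk
  rwa [two_mul k, add_tsub_cancel_right, ← two_mul, mul_comm, ← centralBinom_eq_two_mul_choose]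
    at h

theorem Nat.four_dvd_choose_mul_choose_two_mul {n k : ℕ} (hn : n ≠ 0) (hk : k ≤ n)
    (h : k.isPowerOfTwo → n ≠ k ∧ n ≠ 2 * k) : 4 ∣ n.choose k * (2 * k).choose n := by
  rcases lt_or_ge (2 * k) n with hlt | hle
  · simp [choose_eq_zero_of_lt hlt]
  have hk0 : k ≠ 0 := by omega
  rw [choose_mul_choose_two_mul hk]
  by_cases hpow : k.isPowerOfTwo
  · obtain ⟨m, rfl⟩ := hpow
    have ⟨hnk, hn2k⟩ := h ⟨m, rfl⟩
    exact mul_dvd_mul (two_dvd_centralBinom_of_one_le (by positivity))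
      (Nat.Prime.dvd_choose_pow prime_two (by omega) (by omega))
  · exact (four_dvd_centralBinom_of_not_isPowerOfTwo hk0 hpow).mul_right _

theorem Nat.choose_mul_choose_two_mul_mod_four {n k : ℕ} (hk : k.isPowerOfTwo)
    (hn : n = k ∨ n = 2 * k) : n.choose k * (2 * k).choose n % 4 = 2 := by
  obtain ⟨m, rfl⟩ := hk
  have hsub : (2 ^ m).choose (n - 2 ^ m) = 1 := by
    rcases hn with rfl | rfl
    · simp
    · simp [two_mul]
  rw [choose_mul_choose_two_mul (by omega), hsub, mul_one, centralBinom_two_pow_mod_four]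

theorem Nat.eight_dvd_sq_add_sq_of_mod_four_eq_two {a b : ℕ} (ha : a % 4 = 2) (hb : b % 4 = 2) :
    8 ∣ a ^ 2 + b ^ 2 := by
  rw [← div_add_mod a 4, ← div_add_mod b 4, ha, hb]
  exact ⟨2 * (a / 4) ^ 2 + 2 * (a / 4) + 2 * (b / 4) ^ 2 + 2 * (b / 4) + 1, by ring⟩

theorem Nat.eight_dvd_sq_of_four_dvd {a : ℕ} (h : 4 ∣ a) : 8 ∣ a ^ 2 :=
  dvd_trans (by norm_num) (pow_dvd_pow_of_dvd h 2)

theorem aperyLikeEpsilon_eq_natCast_sum (n : ℕ) : aperyLikeEpsilon n =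
    ((∑ k ∈ range (n + 1), (n.choose k * (2 * k).choose n) ^ 2 : ℕ) : ℤ) := by
  simp [aperyLikeEpsilon, mul_pow]

theorem eight_dvd_aperyLikeEpsilon_of_not_isPowerOfTwo {n : ℕ} (hn : n ≠ 0)
    (h : ¬ n.isPowerOfTwo) : 8 ∣ aperyLikeEpsilon n := by
  rw [aperyLikeEpsilon_eq_natCast_sum]
  norm_cast
  refine dvd_sum fun k hk => eight_dvd_sq_of_four_dvd ?_
  refine four_dvd_choose_mul_choose_two_mul hn (mem_range_succ_iff.mp hk) ?_
  rintro ⟨m, rfl⟩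
  exact ⟨fun h' => h ⟨m, h'⟩, fun h' => h ⟨m + 1, by rw [h', pow_succ']⟩⟩

theorem eight_dvd_aperyLikeEpsilon_two_mul_two_pow (b : ℕ) :
    8 ∣ aperyLikeEpsilon (2 * 2 ^ b) := by
  have hpos := Nat.two_pow_pos b
  have hsub : {2 ^ b, 2 * 2 ^ b} ⊆ range (2 * 2 ^ b + 1) := by
    simp only [insert_subset_iff, singleton_subset_iff, mem_range]
    omega
  rw [aperyLikeEpsilon_eq_natCast_sum]
  norm_cast
  rw [← sum_sdiff hsub, sum_pair (by omega)]
  refine dvd_add (dvd_sum fun k hk => ?_) (eight_dvd_sq_add_sq_of_mod_four_eq_two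
    (choose_mul_choose_two_mul_mod_four ⟨b, rfl⟩ (.inr rfl))
    (choose_mul_choose_two_mul_mod_four ⟨b + 1, (pow_succ' 2 b).symm⟩ (.inl rfl)))
  simp only [mem_sdiff, mem_range, mem_insert, mem_singleton] at hk
  exact eight_dvd_sq_of_four_dvd <| four_dvd_choose_mul_choose_two_mul (n := 2 * 2 ^ b) (k := k)
    (by omega) (by omega) fun _ => by omega

theorem eight_dvd_aperyLikeEpsilon {n : ℕ} (hn : 2 ≤ n) : 8 ∣ aperyLikeEpsilon n := by
  by_cases h : n.isPowerOfTwo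
  · obtain ⟨_ | b, rfl⟩ := h
    · omega
    · rw [pow_succ']
      exact eight_dvd_aperyLikeEpsilon_two_mul_two_pow b
  · exact eight_dvd_aperyLikeEpsilon_of_not_isPowerOfTwo (by omega) h

/-- For all `n ≥ 2`, the sequence (ε) satisfies `u_{2n} ≡ uₙ (mod 8)`. -/
theorem aperyLikeEpsilon_two_mul_modEq (n : ℕ) (hn : 2 ≤ n) :
    aperyLikeEpsilon (2 * n) ≡ aperyLikeEpsilon n [ZMOD 8] :=
  ((Int.modEq_zero_iff_dvd.mpr (eight_dvd_aperyLikeEpsilon (by omega))).trans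
    (Int.modEq_zero_iff_dvd.mpr (eight_dvd_aperyLikeEpsilon hn)).symm)
end
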